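/- Let p ∈ [0,1]. The following hold for G(n_b,n_w,p) and every k ∈ [n_b]: (i) if v ∈ 𝒥^w_k and N(v) ≠ ∅, then there exists j ∈ [k] such that v = σ(τ^b_j − 1), σ(τ^b_j) ∈ N(v), and σ(τ^b_j) ∈ ℐ^b_k; (ii) 𝒥^w_{n_b} ∩ 𝒪^w_k = ∅ and ℐ^b_{n_b} ∩ 𝒪^b_k = ∅; (iii) V^w_n ∖ 𝒦^w_k is the disjoint union of the sets 𝒪^w_j for j ∈ [k−1] together with 𝒥^w_k, and V^b_n ∖ 𝒦^b_k is the disjoint union of the sets 𝒪^b_j for j ∈ [k−1] together with ℐ^b_k; (iv) N(Σ^b(τ^b_k)) ⊆ (∪_{j∈[k]} 𝒪^w_j) ∪ 𝒥^w_k, and N²(Σ^b(τ^b_k)) = (∪_{j∈[k]} 𝒪^b_j) ∖ Σ^b(τ^b_k). -/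

import Mathlib

open MeasureTheory ProbabilityTheory Filter

namespace PrimBip

/-- Vertex set of the complete bipartite graph `K_{n_b,n_w}`:
black vertices are `Sum.inl`, white vertices are `Sum.inr`. -/
abbrev V (nb nw : ℕ) := Fin nb ⊕ Fin nw

def blacks (nb nw : ℕ) : Set (V nb nw) := Set.range Sum.inl

def whites (nb nw : ℕ) : Set (V nb nw) := Set.range Sum.inr

/-- Edge weights extended to pairs of vertices; non-edges get the junk value `2`. -/
def wt {nb nw : ℕ} (W : Fin nb → Fin nw → ℝ) : V nb nw → V nb nw → ℝ
  | Sum.inl b, Sum.inr w => W b w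
  | Sum.inr w, Sum.inl b => W b w
  | _, _ => 2

lemma wt_symm {nb nw : ℕ} (W : Fin nb → Fin nw → ℝ) (v v' : V nb nw) :
    wt W v v' = wt W v' v := by
  cases v <;> cases v' <;> rfl

/-- The a.s. properties of i.i.d. uniform edge weights: all weights lie in `(0,1)`
and are pairwise distinct. -/
def GoodWeights {nb nw : ℕ} (W : Fin nb → Fin nw → ℝ) : Prop :=
  (∀ b w, W b w ∈ Set.Ioo (0:ℝ) 1) ∧
    Function.Injective (fun bw : Fin nb × Fin nw => W bw.1 bw.2)

/-- `σ` (0-indexed: `σ 0` is the first vertex) is a Prim sequence for the weights `W`: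
it enumerates all the vertices, and at each step `k ≥ 1` the vertex `σ k` is an endpoint
of the minimal-weight edge joining `{σ 0, …, σ (k-1)}` to its complement. -/
def IsPrimSeq {nb nw : ℕ} (W : Fin nb → Fin nw → ℝ) (σ : ℕ → V nb nw) : Prop :=
  σ '' Set.Iio (nb + nw) = Set.univ ∧ Set.InjOn σ (Set.Iio (nb + nw)) ∧
    ∀ k, 0 < k → k < nb + nw →
      ∃ j < k, ∀ a b, a < k → k ≤ b → b < nb + nw →
        wt W (σ j) (σ k) ≤ wt W (σ a) (σ b)

/-- The Bernoulli bond percolation graph `G(n_b,n_w,p)`: keep exactly the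
(bipartite) edges of weight `≤ p`. -/
def percGraph {nb nw : ℕ} (W : Fin nb → Fin nw → ℝ) (p : ℝ) : SimpleGraph (V nb nw) where
  Adj v v' := v ≠ v' ∧ wt W v v' ≤ p
  symm := ⟨fun _ _ h => ⟨h.1.symm, by rw [wt_symm]; exact h.2⟩⟩
  loopless := ⟨fun _ h => h.1 rfl⟩

/-- 1-neighbourhood of a set of vertices. -/
def nbhd {α : Type*} (G : SimpleGraph α) (A : Set α) : Set α :=
  {v | v ∉ A ∧ ∃ a ∈ A, G.Adj a v}

/-- 2-neighbourhood of a set of vertices. -/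
def nbhd2 {α : Type*} (G : SimpleGraph α) (A : Set α) : Set α :=
  nbhd G (nbhd G A) \ A

/-- `Sig σ i` = `Σ(i)`, the set of the first `i` vertices in the Prim ranking. -/
def Sig {nb nw : ℕ} (σ : ℕ → V nb nw) (i : ℕ) : Set (V nb nw) := σ '' Set.Iio i

def SigB {nb nw : ℕ} (σ : ℕ → V nb nw) (i : ℕ) : Set (V nb nw) := Sig σ i ∩ blacks nb nw

def SigW {nb nw : ℕ} (σ : ℕ → V nb nw) (i : ℕ) : Set (V nb nw) := Sig σ i ∩ whites nb nw

/-- `tb σ k` = `τ^b_k`, the (1-based) Prim rank of the `k`-th black vertex. -/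
noncomputable def tb {nb nw : ℕ} (σ : ℕ → V nb nw) (k : ℕ) : ℕ :=
  sInf {i | (SigB σ i).ncard = k}

/-- The vertex of (1-based) Prim rank `i`. -/
def vat {nb nw : ℕ} (σ : ℕ → V nb nw) (i : ℕ) : V nb nw := σ (i - 1)

/-- `σ^b(k) = σ(τ^b_k)`, the `k`-th black vertex in Prim order. -/
noncomputable def sigb {nb nw : ℕ} (σ : ℕ → V nb nw) (k : ℕ) : V nb nw := vat σ (tb σ k)

/-- 0-based Prim rank of a vertex. -/
noncomputable def rk0 {nb nw : ℕ} (σ : ℕ → V nb nw) (v : V nb nw) : ℕ := sInf {i | σ i = v}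

/-- A lead vertex: the vertex of lowest Prim rank in its connected component of `G`. -/
def isLead {nb nw : ℕ} (G : SimpleGraph (V nb nw)) (σ : ℕ → V nb nw) (v : V nb nw) : Prop :=
  ∀ u, G.Reachable v u → rk0 σ v ≤ rk0 σ u

/-- A root vertex: a black vertex of lowest Prim rank among the black vertices of
its connected component of `G`. -/
def isRoot {nb nw : ℕ} (G : SimpleGraph (V nb nw)) (σ : ℕ → V nb nw) (v : V nb nw) : Prop :=
  v ∈ blacks nb nw ∧ ∀ u ∈ blacks nb nw, G.Reachable v u → rk0 σ v ≤ rk0 σ u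

/-- `𝒥^w_k`: the white lead vertices among `Σ^w(τ^b_k)`. -/
def Jw {nb nw : ℕ} (G : SimpleGraph (V nb nw)) (σ : ℕ → V nb nw) (k : ℕ) : Set (V nb nw) :=
  {v | v ∈ SigW σ (tb σ k) ∧ isLead G σ v}

/-- `ℐ^b_k`: the root vertices among `Σ^b(τ^b_k)`. -/
def Ib {nb nw : ℕ} (G : SimpleGraph (V nb nw)) (σ : ℕ → V nb nw) (k : ℕ) : Set (V nb nw) :=
  {v | v ∈ SigB σ (tb σ k) ∧ isRoot G σ v}

noncomputable def Jwc {nb nw : ℕ} (G : SimpleGraph (V nb nw)) (σ : ℕ → V nb nw) (k : ℕ) : ℕ :=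
  (Jw G σ k).ncard

noncomputable def Ibc {nb nw : ℕ} (G : SimpleGraph (V nb nw)) (σ : ℕ → V nb nw) (k : ℕ) : ℕ :=
  (Ib G σ k).ncard

/-- `𝒦^w_k`: the pool of white vertices available for discovery at step `k`. -/
noncomputable def Kw {nb nw : ℕ} (G : SimpleGraph (V nb nw)) (σ : ℕ → V nb nw) :
    ℕ → Set (V nb nw)
  | 0 => ∅
  | 1 => whites nb nw \ SigW σ (tb σ 1)
  | (k+2) => Kw G σ (k+1) \ ((nbhd G {sigb σ (k+1)} ∩ Kw G σ (k+1)) ∪ SigW σ (tb σ (k+2)))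

/-- `𝒪^w_k = N(σ^b(k)) ∩ 𝒦^w_k`. -/
noncomputable def Ow {nb nw : ℕ} (G : SimpleGraph (V nb nw)) (σ : ℕ → V nb nw) (k : ℕ) :
    Set (V nb nw) :=
  nbhd G {sigb σ k} ∩ Kw G σ k

/-- Auxiliary recursion: `(ObAux k).1 = ∪_{j ∈ [k]} 𝒪^b_j` and `(ObAux k).2 = 𝒪^b_k`. -/
noncomputable def ObAux {nb nw : ℕ} (G : SimpleGraph (V nb nw)) (σ : ℕ → V nb nw) :
    ℕ → Set (V nb nw) × Set (V nb nw)
  | 0 => (∅, ∅)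
  | (k+1) =>
    let c := (ObAux G σ k).1
    let o := nbhd2 G {sigb σ (k+1)} ∩ (blacks nb nw \ (c ∪ SigB σ (tb σ (k+1))))
    (c ∪ o, o)

/-- `𝒪^b_k`, the 2-neighbourhood discovered at step `k`. -/
noncomputable def Ob {nb nw : ℕ} (G : SimpleGraph (V nb nw)) (σ : ℕ → V nb nw) (k : ℕ) :
    Set (V nb nw) :=
  (ObAux G σ k).2

/-- `𝒦^b_k = V^b ∖ (∪_{j ≤ k-1} 𝒪^b_j ∪ Σ^b(τ^b_k))`. -/
noncomputable def Kb {nb nw : ℕ} (G : SimpleGraph (V nb nw)) (σ : ℕ → V nb nw) (k : ℕ) :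
    Set (V nb nw) :=
  blacks nb nw \ ((ObAux G σ (k-1)).1 ∪ SigB σ (tb σ k))

noncomputable def Owc {nb nw : ℕ} (G : SimpleGraph (V nb nw)) (σ : ℕ → V nb nw) (k : ℕ) : ℕ :=
  (Ow G σ k).ncard

noncomputable def Obc {nb nw : ℕ} (G : SimpleGraph (V nb nw)) (σ : ℕ → V nb nw) (k : ℕ) : ℕ :=
  (Ob G σ k).ncard

noncomputable def Kwc {nb nw : ℕ} (G : SimpleGraph (V nb nw)) (σ : ℕ → V nb nw) (k : ℕ) : ℕ :=
  (Kw G σ k).ncard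

noncomputable def Kbc {nb nw : ℕ} (G : SimpleGraph (V nb nw)) (σ : ℕ → V nb nw) (k : ℕ) : ℕ :=
  (Kb G σ k).ncard

/-- `S^w_k = Σ_{j ∈ [k]} O^w_j`. -/
noncomputable def Swk {nb nw : ℕ} (G : SimpleGraph (V nb nw)) (σ : ℕ → V nb nw) (k : ℕ) : ℕ :=
  ∑ j ∈ Finset.range k, Owc G σ (j+1)

/-- `S^b_k = Σ_{j ∈ [k]} O^b_j`. -/
noncomputable def Sbk {nb nw : ℕ} (G : SimpleGraph (V nb nw)) (σ : ℕ → V nb nw) (k : ℕ) : ℕ :=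
  ∑ j ∈ Finset.range k, Obc G σ (j+1)

/-- `R(k) = |Σ^w(τ^b_k)| − J^w(k)`. -/
noncomputable def Rfn {nb nw : ℕ} (G : SimpleGraph (V nb nw)) (σ : ℕ → V nb nw) (k : ℕ) : ℤ :=
  ((SigW σ (tb σ k)).ncard : ℤ) - Jwc G σ k

/-- `Δ_k = Σ_{1 ≤ i ≤ O^w_k} |𝒩_i| = |N(𝒪^w_k) ∩ 𝒦^b_k|`. -/
noncomputable def Delta {nb nw : ℕ} (G : SimpleGraph (V nb nw)) (σ : ℕ → V nb nw) (k : ℕ) : ℕ :=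
  (nbhd G (Ow G σ k) ∩ Kb G σ k).ncard

/-- `𝒜^w_k = {σ(i) : i > τ^b_k, σ(i) ∈ ∪_{j ∈ [k−1]} 𝒪^w_j}`. -/
noncomputable def Aw {nb nw : ℕ} (G : SimpleGraph (V nb nw)) (σ : ℕ → V nb nw) (k : ℕ) :
    Set (V nb nw) :=
  (⋃ j ∈ Finset.range (k-1), Ow G σ (j+1)) \ Sig σ (tb σ k)

/-- `𝒜^b_k = (∪_{j ∈ [k]} 𝒪^b_j) ∖ Σ^b(τ^b_k)`. -/
noncomputable def Ab {nb nw : ℕ} (G : SimpleGraph (V nb nw)) (σ : ℕ → V nb nw) (k : ℕ) :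
    Set (V nb nw) :=
  (⋃ j ∈ Finset.range k, Ob G σ (j+1)) \ SigB σ (tb σ k)

/-- The interval `⟦i,j⟧_π` of vertices of π-rank between `i` and `j`. -/
def geoInterval {α : Type*} {m : ℕ} (π : Fin m ≃ α) (i j : Fin m) : Set α :=
  {v | i ≤ π.symm v ∧ π.symm v ≤ j}

/-- `π` is a graph exploration order (GEO) for `G`. -/
def IsGEO {α : Type*} {m : ℕ} (G : SimpleGraph α) (π : Fin m ≃ α) : Prop :=
  ∀ i j : Fin m, i ≤ j → G.Reachable (π i) (π j) →
    ∃ i', i' ≤ i ∧ (G.induce (geoInterval π i' j)).Connected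

/-- A `π`-good path from `u` to `v`: a path along which the π-ranks strictly increase. -/
def IsGoodPath {α : Type*} {m : ℕ} (G : SimpleGraph α) (π : Fin m ≃ α) (u v : α) : Prop :=
  ∃ (k : ℕ) (w : ℕ → α), w 0 = u ∧ w k = v ∧ (∀ i < k, G.Adj (w i) (w (i+1))) ∧
    StrictMonoOn (fun i => π.symm (w i)) (Set.Iic k)

/-- GEO for a 0-indexed enumeration `σ` of the `n` vertices. -/
def IsGEOSeq {α : Type*} (G : SimpleGraph α) (n : ℕ) (σ : ℕ → α) : Prop :=
  ∀ i j, i ≤ j → j < n → G.Reachable (σ i) (σ j) →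
    ∃ i' ≤ i, (G.induce (σ '' Set.Icc i' j)).Connected

/-- `pew W σ i` = `U_{e_i}`, the weight of the `i`-th Prim edge: the minimal weight
over the cut between the first `i` vertices and the rest. -/
noncomputable def pew {nb nw : ℕ} (W : Fin nb → Fin nw → ℝ) (σ : ℕ → V nb nw) (i : ℕ) : ℝ :=
  sInf {x | ∃ a b, a < i ∧ i ≤ b ∧ b < nb + nw ∧ x = wt W (σ a) (σ b)}

/-- The sequence `J_j` of Prim ranks at which new components start. -/
noncomputable def Jseq {nb nw : ℕ} (W : Fin nb → Fin nw → ℝ) (σ : ℕ → V nb nw) (p : ℝ) :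
    ℕ → ℕ
  | 0 => 0
  | (j+1) => sInf ({i | Jseq W σ p j < i ∧ i < nb + nw ∧ p < pew W σ i} ∪ {nb + nw})

/-- `m = inf{j ≥ 1 : J_j = n}`, the number of connected components. -/
noncomputable def mComp {nb nw : ℕ} (W : Fin nb → Fin nw → ℝ) (σ : ℕ → V nb nw) (p : ℝ) : ℕ :=
  sInf {j | 1 ≤ j ∧ Jseq W σ p j = nb + nw}

/-- The binomial probability mass function. -/
noncomputable def binomPMF (m : ℕ) (p : ℝ) (j : ℕ) : ℝ :=
  (m.choose j : ℝ) * p ^ j * (1 - p) ^ (m - j)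

/-- The pmf of the distribution `𝒟(m, k, p)`: the law of `X_1 + ⋯ + X_k` where
`X_1 ~ Bin(m,p)` and, given `X_1,…,X_i`, `X_{i+1} ~ Bin(m − Σ_{j≤i} X_j, p)`. -/
noncomputable def Dpmf : ℕ → ℕ → ℝ → ℕ → ℝ
  | _, 0, _, j => if j = 0 then 1 else 0
  | m, (k+1), p, j => ∑ i ∈ Finset.range (j+1), binomPMF m p i * Dpmf (m - i) k p (j - i)

/-! The graph `G(n_b,n_w,p)` is bipartite, and Prim's order joins a vertex to an earlier one
whenever some edge of `G(n_b,n_w,p)` crosses the cut in front of that vertex. Hence a vertex is a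
lead iff no edge crosses the cut in front of it, so a white vertex is a lead iff it has no earlier
neighbour, and a black vertex is a root iff it lies in the 2-neighbourhood of no earlier black
vertex. On the other hand `𝒪^w_k` (resp. `𝒪^b_k`) consists of the white (resp. black) vertices
whose first discoverer is `k`, i.e. for which `k` is the least index such that `σ^b(k)` precedes
them and they lie in `N(σ^b(k))` (resp. `N²(σ^b(k))`). Items (i)–(iv) are read off these two
descriptions. -/

lemma isLeast_iff_forall_lt_not_isLeast {S : Set ℕ} {k : ℕ} (hk : k ∈ S) :
    IsLeast S k ↔ ∀ j < k, ¬ IsLeast S j := by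
  refine ⟨fun h j hj hj' => absurd (h.2 hj'.1) (not_le.mpr hj), fun h => ⟨hk, fun j hj => ?_⟩⟩
  by_contra hjk
  exact h _ ((Nat.sInf_le hj).trans_lt (not_le.mp hjk)) (isLeast_csInf ⟨j, hj⟩)

section Neighbourhoods

variable {α : Type*} {G : SimpleGraph α} {s t : Set α}

lemma mem_nbhd_singleton {u v : α} : v ∈ nbhd G {u} ↔ v ≠ u ∧ G.Adj u v := by
  simp [nbhd]

lemma reachable_of_mem_nbhd2_singleton {u v : α} (h : v ∈ nbhd2 G {u}) : G.Reachable u v := by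
  obtain ⟨⟨-, a, ha, hav⟩, -⟩ := h
  exact (mem_nbhd_singleton.mp ha).2.reachable.trans hav.reachable

lemma nbhd_subset_of_isBipartiteWith (hG : G.IsBipartiteWith s t) {S : Set α} (hS : S ⊆ s) :
    nbhd G S ⊆ t := by
  rintro v ⟨-, a, ha, hav⟩
  exact hG.mem_of_mem_adj (hS ha) hav

lemma mem_nbhd2_singleton_of_adj (hG : G.IsBipartiteWith s t) {b a x : α} (hb : b ∈ s)
    (hxb : x ≠ b) (hba : G.Adj b a) (hax : G.Adj a x) : x ∈ nbhd2 G {b} := by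
  have ha := hG.mem_of_mem_adj hb hba
  refine ⟨⟨fun hx => ?_, a, mem_nbhd_singleton.mpr ⟨hba.ne.symm, hba⟩, hax⟩, hxb⟩
  exact hG.disjoint.ne_of_mem (hG.mem_of_mem_adj' ha hax.symm)
    (hG.mem_of_mem_adj hb (mem_nbhd_singleton.mp hx).2) rfl

end Neighbourhoods

variable {nb nw : ℕ}

lemma disjoint_blacks_whites : Disjoint (blacks nb nw) (whites nb nw) :=
  Set.isCompl_range_inl_range_inr.disjoint

lemma ncard_blacks : (blacks nb nw).ncard = nb := by
  rw [blacks, ← Set.image_univ, Set.ncard_image_of_injective _ Sum.inl_injective,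
    Set.ncard_univ, Nat.card_eq_fintype_card, Fintype.card_fin]

lemma isBipartiteWith_percGraph (W : Fin nb → Fin nw → ℝ) {p : ℝ} (hp : p < 2) :
    (percGraph W p).IsBipartiteWith (blacks nb nw) (whites nb nw) where
  disjoint := disjoint_blacks_whites
  mem_of_adj := by
    rintro (b | w) (b' | w') ⟨-, h⟩
    · exact absurd h (by simp only [wt]; linarith)
    · exact Or.inl ⟨⟨b, rfl⟩, ⟨w', rfl⟩⟩
    · exact Or.inr ⟨⟨w, rfl⟩, ⟨b', rfl⟩⟩
    · exact absurd h (by simp only [wt]; linarith)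

section Rank

variable {σ : ℕ → V nb nw}

lemma rk0_lt (hσ : Set.BijOn σ (Set.Iio (nb + nw)) Set.univ) (x : V nb nw) :
    rk0 σ x < nb + nw := by
  obtain ⟨l, hl, rfl⟩ := hσ.surjOn (Set.mem_univ x)
  exact lt_of_le_of_lt (Nat.sInf_le rfl) hl

lemma apply_rk0 (hσ : Set.BijOn σ (Set.Iio (nb + nw)) Set.univ) (x : V nb nw) :
    σ (rk0 σ x) = x := by
  obtain ⟨l, -, rfl⟩ := hσ.surjOn (Set.mem_univ x)
  exact Nat.sInf_mem (s := {i | σ i = σ l}) ⟨l, rfl⟩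

lemma rk0_apply (hσ : Set.BijOn σ (Set.Iio (nb + nw)) Set.univ) {l : ℕ} (hl : l < nb + nw) :
    rk0 σ (σ l) = l :=
  hσ.injOn (rk0_lt hσ _) hl (apply_rk0 hσ _)

lemma rk0_injective (hσ : Set.BijOn σ (Set.Iio (nb + nw)) Set.univ) :
    Function.Injective (rk0 σ) := fun x y h => by
  rw [← apply_rk0 hσ x, h, apply_rk0 hσ]

lemma mem_Sig_iff (hσ : Set.BijOn σ (Set.Iio (nb + nw)) Set.univ) {i : ℕ} {x : V nb nw} :
    x ∈ Sig σ i ↔ rk0 σ x < i := by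
  constructor
  · rintro ⟨l, hl, rfl⟩
    exact lt_of_le_of_lt (Nat.sInf_le rfl) hl
  · exact fun h => ⟨_, h, apply_rk0 hσ x⟩

end Rank

section Cuts

variable {G : SimpleGraph (V nb nw)} {σ : ℕ → V nb nw}

def IsCut (G : SimpleGraph (V nb nw)) (σ : ℕ → V nb nw) (c : ℕ) : Prop :=
  ∀ u v, rk0 σ u < c → c ≤ rk0 σ v → ¬ G.Adj u v

def JoinsAcrossCuts (G : SimpleGraph (V nb nw)) (σ : ℕ → V nb nw) : Prop :=
  ∀ x, ¬ IsCut G σ (rk0 σ x) → ∃ y, rk0 σ y < rk0 σ x ∧ G.Adj y x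

lemma IsPrimSeq.bijOn {W : Fin nb → Fin nw → ℝ} (hσ : IsPrimSeq W σ) :
    Set.BijOn σ (Set.Iio (nb + nw)) Set.univ :=
  ⟨fun _ _ => Set.mem_univ _, hσ.2.1, fun x _ => hσ.1.symm ▸ Set.mem_univ x⟩

lemma IsPrimSeq.joinsAcrossCuts {W : Fin nb → Fin nw → ℝ} (hσ : IsPrimSeq W σ) (p : ℝ) :
    JoinsAcrossCuts (percGraph W p) σ := by
  intro x hx
  unfold IsCut at hx
  push Not at hx
  obtain ⟨u, v, hu, hv, hadj⟩ := hx
  have hbij := hσ.bijOn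
  obtain ⟨j, hj, hmin⟩ := hσ.2.2 (rk0 σ x) (by omega) (rk0_lt hbij x)
  have hwt := hmin _ _ hu hv (rk0_lt hbij v)
  rw [apply_rk0 hbij, apply_rk0 hbij, apply_rk0 hbij] at hwt
  have hjn : j < nb + nw := hj.trans (rk0_lt hbij x)
  refine ⟨σ j, by rwa [rk0_apply hbij hjn], fun h => hj.ne ?_, hwt.trans hadj.2⟩
  rw [← h, rk0_apply hbij hjn]

lemma IsCut.le_rk0_of_reachable {c : ℕ} (hc : IsCut G σ c) {u v : V nb nw}
    (hu : c ≤ rk0 σ u) (h : G.Reachable u v) : c ≤ rk0 σ v := by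
  obtain ⟨w⟩ := h
  induction w with
  | nil => exact hu
  | cons hadj _ ih => exact ih (not_lt.mp fun hlt => hc _ _ hlt hu hadj.symm)

lemma isCut_of_forall_adj (hext : JoinsAcrossCuts G σ) {x : V nb nw}
    (h : ∀ y, G.Adj y x → rk0 σ x ≤ rk0 σ y) : IsCut G σ (rk0 σ x) := by
  by_contra hn
  obtain ⟨y, hy, hadj⟩ := hext x hn
  exact absurd (h y hadj) (not_le.mpr hy)

lemma isLead_iff_forall_adj (hext : JoinsAcrossCuts G σ) {x : V nb nw} :
    isLead G σ x ↔ ∀ y, G.Adj y x → rk0 σ x ≤ rk0 σ y :=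
  ⟨fun h y hy => h y hy.symm.reachable,
    fun h _ hu => (isCut_of_forall_adj hext h).le_rk0_of_reachable le_rfl hu⟩

lemma isCut_of_isLead (hext : JoinsAcrossCuts G σ) {x : V nb nw} (h : isLead G σ x) :
    IsCut G σ (rk0 σ x) :=
  isCut_of_forall_adj hext fun y hy => h y hy.symm.reachable

lemma adj_succ_of_isCut (hσ : Set.BijOn σ (Set.Iio (nb + nw)) Set.univ)
    (hext : JoinsAcrossCuts G σ) {x y : V nb nw} (hc : IsCut G σ (rk0 σ x)) (hxy : G.Adj x y) :
    rk0 σ x + 1 < nb + nw ∧ G.Adj x (σ (rk0 σ x + 1)) := by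
  have hxy' : rk0 σ x < rk0 σ y := by
    rcases lt_trichotomy (rk0 σ y) (rk0 σ x) with h | h | h
    · exact absurd hxy.symm (hc y x h le_rfl)
    · exact absurd (rk0_injective hσ h) hxy.ne.symm
    · exact h
  have hn : rk0 σ x + 1 < nb + nw := lt_of_le_of_lt hxy' (rk0_lt hσ y)
  set z := σ (rk0 σ x + 1)
  have hz : rk0 σ z = rk0 σ x + 1 := rk0_apply hσ hn
  obtain ⟨w, hw, hwz⟩ := hext z (hz ▸ fun h' => h' x y (by omega) (by omega) hxy)
  have hwx : rk0 σ w = rk0 σ x := by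
    by_contra hne
    exact hc w z (by omega) (by omega) hwz
  exact ⟨hn, rk0_injective hσ hwx ▸ hwz⟩

end Cuts

section BlackIndex

variable {σ : ℕ → V nb nw}

noncomputable def numBlack (σ : ℕ → V nb nw) (i : ℕ) : ℕ := (SigB σ i).ncard

noncomputable def blackIndex (σ : ℕ → V nb nw) (a : V nb nw) : ℕ := numBlack σ (rk0 σ a + 1)

lemma numBlack_mono : Monotone (numBlack σ) := fun _ _ h =>
  Set.ncard_le_ncard (Set.inter_subset_inter_left _ (Set.image_mono (Set.Iio_subset_Iio h)))

lemma numBlack_zero : numBlack σ 0 = 0 := by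
  simp [numBlack, SigB, Sig]

lemma SigB_succ (i : ℕ) :
    SigB σ (i + 1) = (σ '' {i} ∩ blacks nb nw) ∪ SigB σ i := by
  rw [SigB, SigB, Sig, Sig, ← Set.union_inter_distrib_right, ← Set.image_union,
    Set.singleton_union, ← Order.Iio_succ_eq_insert, Order.succ_eq_add_one]

lemma numBlack_succ_of_mem (hσ : Set.BijOn σ (Set.Iio (nb + nw)) Set.univ) {i : ℕ}
    (hi : i < nb + nw) (hb : σ i ∈ blacks nb nw) : numBlack σ (i + 1) = numBlack σ i + 1 := by
  have hnot : σ i ∉ SigB σ i := fun h => by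
    simpa [rk0_apply hσ hi] using (mem_Sig_iff hσ).mp h.1
  rw [numBlack, numBlack, SigB_succ, Set.image_singleton, Set.singleton_inter_of_mem hb,
    Set.singleton_union, Set.ncard_insert_of_notMem hnot]

lemma numBlack_succ_of_notMem {i : ℕ} (hb : σ i ∉ blacks nb nw) :
    numBlack σ (i + 1) = numBlack σ i := by
  rw [numBlack, numBlack, SigB_succ, Set.image_singleton, Set.singleton_inter_of_notMem hb,
    Set.empty_union]

lemma numBlack_total (hσ : Set.BijOn σ (Set.Iio (nb + nw)) Set.univ) :
    numBlack σ (nb + nw) = nb := by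
  rw [numBlack, SigB, Sig, hσ.image_eq, Set.univ_inter, ncard_blacks]

lemma blackIndex_eq_succ (hσ : Set.BijOn σ (Set.Iio (nb + nw)) Set.univ) {a : V nb nw}
    (ha : a ∈ blacks nb nw) : blackIndex σ a = numBlack σ (rk0 σ a) + 1 := by
  rw [blackIndex, numBlack_succ_of_mem hσ (rk0_lt hσ a) ((apply_rk0 hσ a).symm ▸ ha)]

lemma one_le_blackIndex (hσ : Set.BijOn σ (Set.Iio (nb + nw)) Set.univ) {a : V nb nw}
    (ha : a ∈ blacks nb nw) : 1 ≤ blackIndex σ a := by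
  rw [blackIndex_eq_succ hσ ha]
  exact Nat.le_add_left 1 _

lemma blackIndex_le (hσ : Set.BijOn σ (Set.Iio (nb + nw)) Set.univ) (a : V nb nw) :
    blackIndex σ a ≤ nb :=
  (numBlack_mono (rk0_lt hσ a)).trans_eq (numBlack_total hσ)

lemma blackIndex_lt_blackIndex (hσ : Set.BijOn σ (Set.Iio (nb + nw)) Set.univ)
    {a b : V nb nw} (hb : b ∈ blacks nb nw) (h : rk0 σ a < rk0 σ b) :
    blackIndex σ a < blackIndex σ b := by
  rw [blackIndex_eq_succ hσ hb]
  exact Nat.lt_succ_of_le (numBlack_mono h)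

lemma blackIndex_le_blackIndex_iff (hσ : Set.BijOn σ (Set.Iio (nb + nw)) Set.univ)
    {a b : V nb nw} (ha : a ∈ blacks nb nw) :
    blackIndex σ a ≤ blackIndex σ b ↔ rk0 σ a ≤ rk0 σ b := by
  refine ⟨fun h => not_lt.mp fun h' => ?_, fun h => numBlack_mono (Nat.succ_le_succ h)⟩
  exact absurd h (not_le.mpr (blackIndex_lt_blackIndex hσ ha h'))

lemma tb_blackIndex (hσ : Set.BijOn σ (Set.Iio (nb + nw)) Set.univ) {a : V nb nw}
    (ha : a ∈ blacks nb nw) : tb σ (blackIndex σ a) = rk0 σ a + 1 := by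
  refine le_antisymm (Nat.sInf_le rfl) (le_csInf ⟨_, rfl⟩ fun i hi => not_lt.mp fun h => ?_)
  have : numBlack σ i < blackIndex σ a := by
    rw [blackIndex_eq_succ hσ ha]
    exact Nat.lt_succ_of_le (numBlack_mono (Nat.le_of_lt_succ h))
  exact absurd hi this.ne

lemma sigb_blackIndex (hσ : Set.BijOn σ (Set.Iio (nb + nw)) Set.univ) {a : V nb nw}
    (ha : a ∈ blacks nb nw) : sigb σ (blackIndex σ a) = a := by
  rw [sigb, vat, tb_blackIndex hσ ha, Nat.add_sub_cancel, apply_rk0 hσ]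

/-- `numBlack` climbs from `0` to `n_b` in unit steps. -/
lemma exists_blackIndex_eq (hσ : Set.BijOn σ (Set.Iio (nb + nw)) Set.univ) {k : ℕ}
    (hk1 : 1 ≤ k) (hk2 : k ≤ nb) : ∃ a ∈ blacks nb nw, blackIndex σ a = k := by
  classical
  have hex : ∃ i, k ≤ numBlack σ i := ⟨nb + nw, (numBlack_total hσ).symm ▸ hk2⟩
  obtain ⟨i, hi, hin, hmin⟩ : ∃ i, k ≤ numBlack σ i ∧ i ≤ nb + nw ∧
      ∀ j < i, numBlack σ j < k :=
    ⟨Nat.find hex, Nat.find_spec hex, Nat.find_min' hex ((numBlack_total hσ).symm ▸ hk2),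
      fun j hj => not_le.mp (Nat.find_min hex hj)⟩
  obtain _ | l := i
  · rw [numBlack_zero] at hi
    omega
  have hl : l < nb + nw := Nat.lt_of_succ_le hin
  have hlk := hmin l (Nat.lt_succ_self l)
  have hb : σ l ∈ blacks nb nw := by
    by_contra hb
    rw [numBlack_succ_of_notMem hb] at hi
    omega
  refine ⟨σ l, hb, ?_⟩
  rw [blackIndex, rk0_apply hσ hl]
  rw [numBlack_succ_of_mem hσ hl hb] at hi ⊢
  omega

lemma blackIndex_sigb (hσ : Set.BijOn σ (Set.Iio (nb + nw)) Set.univ) {j : ℕ} (hj1 : 1 ≤ j)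
    (hj2 : j ≤ nb) : sigb σ j ∈ blacks nb nw ∧ blackIndex σ (sigb σ j) = j := by
  obtain ⟨a, ha, rfl⟩ := exists_blackIndex_eq hσ hj1 hj2
  rw [sigb_blackIndex hσ ha]
  exact ⟨ha, rfl⟩

lemma mem_SigB_tb_iff (hσ : Set.BijOn σ (Set.Iio (nb + nw)) Set.univ) {k : ℕ} (hk1 : 1 ≤ k)
    (hk2 : k ≤ nb) {a : V nb nw} (ha : a ∈ blacks nb nw) :
    a ∈ SigB σ (tb σ k) ↔ blackIndex σ a ≤ k := by
  obtain ⟨c, hc, rfl⟩ := exists_blackIndex_eq hσ hk1 hk2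
  rw [SigB, Set.mem_inter_iff, mem_Sig_iff hσ, tb_blackIndex hσ hc,
    blackIndex_le_blackIndex_iff hσ ha, Nat.lt_succ_iff, and_iff_left ha]

lemma tb_le_tb_iff (hσ : Set.BijOn σ (Set.Iio (nb + nw)) Set.univ) {j k : ℕ} (hj1 : 1 ≤ j)
    (hj2 : j ≤ nb) (hk1 : 1 ≤ k) (hk2 : k ≤ nb) : tb σ j ≤ tb σ k ↔ j ≤ k := by
  obtain ⟨a, ha, rfl⟩ := exists_blackIndex_eq hσ hj1 hj2
  obtain ⟨c, hc, rfl⟩ := exists_blackIndex_eq hσ hk1 hk2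
  rw [tb_blackIndex hσ ha, tb_blackIndex hσ hc, blackIndex_le_blackIndex_iff hσ ha,
    Nat.add_le_add_iff_right]

end BlackIndex

section Discovery

variable {σ : ℕ → V nb nw} {N : V nb nw → Set (V nb nw)} {C : Set (V nb nw)}
  {O : ℕ → Set (V nb nw)}

/-- `tb σ m ≤ rk0 σ x` says that `σ^b(m)` comes before `x`, since `τ^b_m` is a 1-based rank. -/
def discoverers (N : V nb nw → Set (V nb nw)) (σ : ℕ → V nb nw) (x : V nb nw) : Set ℕ :=
  {m | 1 ≤ m ∧ m ≤ nb ∧ tb σ m ≤ rk0 σ x ∧ x ∈ N (sigb σ m)}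

def pool (σ : ℕ → V nb nw) (C : Set (V nb nw)) (O : ℕ → Set (V nb nw)) (k : ℕ) :
    Set (V nb nw) :=
  C \ (Sig σ (tb σ k) ∪ ⋃ j ∈ Finset.range (k - 1), O (j + 1))

def IsDiscoveryProcess (σ : ℕ → V nb nw) (N : V nb nw → Set (V nb nw)) (C : Set (V nb nw))
    (O : ℕ → Set (V nb nw)) : Prop :=
  ∀ k, 1 ≤ k → k ≤ nb → O k = N (sigb σ k) ∩ pool σ C O k

def undiscovered (σ : ℕ → V nb nw) (N : V nb nw → Set (V nb nw)) (C : Set (V nb nw))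
    (k : ℕ) : Set (V nb nw) :=
  {x | x ∈ C ∧ x ∈ Sig σ (tb σ k) ∧ discoverers N σ x = ∅}

lemma blackIndex_mem_discoverers (hσ : Set.BijOn σ (Set.Iio (nb + nw)) Set.univ)
    {a x : V nb nw} (ha : a ∈ blacks nb nw) (hax : rk0 σ a < rk0 σ x) (hx : x ∈ N a) :
    blackIndex σ a ∈ discoverers N σ x :=
  ⟨one_le_blackIndex hσ ha, blackIndex_le hσ a, (tb_blackIndex hσ ha).symm ▸ hax,
    (sigb_blackIndex hσ ha).symm ▸ hx⟩

lemma discoverers_nonempty_iff (hσ : Set.BijOn σ (Set.Iio (nb + nw)) Set.univ)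
    {x : V nb nw} :
    (discoverers N σ x).Nonempty ↔ ∃ a ∈ blacks nb nw, rk0 σ a < rk0 σ x ∧ x ∈ N a := by
  constructor
  · rintro ⟨m, hm1, hm2, hm3, hm4⟩
    obtain ⟨a, ha, rfl⟩ := exists_blackIndex_eq hσ hm1 hm2
    rw [tb_blackIndex hσ ha] at hm3
    rw [sigb_blackIndex hσ ha] at hm4
    exact ⟨a, ha, hm3, hm4⟩
  · rintro ⟨a, ha, hax, hx⟩
    exact ⟨_, blackIndex_mem_discoverers hσ ha hax hx⟩

theorem IsDiscoveryProcess.mem_iff (hσ : Set.BijOn σ (Set.Iio (nb + nw)) Set.univ)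
    (hO : IsDiscoveryProcess σ N C O) {k : ℕ} (hk1 : 1 ≤ k) (hk2 : k ≤ nb) {x : V nb nw} :
    x ∈ O k ↔ x ∈ C ∧ IsLeast (discoverers N σ x) k := by
  induction k using Nat.strong_induction_on with
  | _ k ih =>
    rw [hO k hk1 hk2, pool]
    constructor
    · rintro ⟨hN, hC, hnot⟩
      have hk : k ∈ discoverers N σ x :=
        ⟨hk1, hk2, not_lt.mp fun h => hnot (Or.inl ((mem_Sig_iff hσ).mpr h)), hN⟩
      refine ⟨hC, (isLeast_iff_forall_lt_not_isLeast hk).mpr fun j hj hleast =>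
        hnot (Or.inr ?_)⟩
      have hj1 := hleast.1.1
      refine Set.mem_biUnion (Finset.mem_range.mpr (by omega : j - 1 < k - 1)) ?_
      rw [Nat.sub_add_cancel hj1]
      exact (ih j hj hj1 (by omega)).mpr ⟨hC, hleast⟩
    · rintro ⟨hC, hleast⟩
      obtain ⟨-, -, htb, hN⟩ := hleast.1
      refine ⟨hN, hC, ?_⟩
      rintro (hS | hU)
      · exact absurd ((mem_Sig_iff hσ).mp hS) (not_lt.mpr htb)
      · obtain ⟨j, hj, hx⟩ : ∃ j < k - 1, x ∈ O (j + 1) := by simpa using hU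
        have := ((ih (j + 1) (by omega) (by omega) (by omega)).mp hx).2.unique hleast
        omega

lemma IsDiscoveryProcess.exists_mem_of_mem_discoverers
    (hσ : Set.BijOn σ (Set.Iio (nb + nw)) Set.univ) (hO : IsDiscoveryProcess σ N C O)
    {x : V nb nw} (hC : x ∈ C) {m : ℕ} (hm : m ∈ discoverers N σ x) :
    ∃ j ∈ discoverers N σ x, j ≤ m ∧ x ∈ O j := by
  have hleast := isLeast_csInf ⟨m, hm⟩
  exact ⟨_, hleast.1, hleast.2 hm, (hO.mem_iff hσ hleast.1.1 hleast.1.2.1).mpr ⟨hC, hleast⟩⟩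

lemma IsDiscoveryProcess.disjoint (hσ : Set.BijOn σ (Set.Iio (nb + nw)) Set.univ)
    (hO : IsDiscoveryProcess σ N C O) {i j : ℕ} (hi1 : 1 ≤ i) (hi2 : i ≤ nb) (hj1 : 1 ≤ j)
    (hj2 : j ≤ nb) (hij : i ≠ j) : Disjoint (O i) (O j) :=
  Set.disjoint_left.mpr fun _ hi hj =>
    hij (((hO.mem_iff hσ hi1 hi2).mp hi).2.unique ((hO.mem_iff hσ hj1 hj2).mp hj).2)

lemma IsDiscoveryProcess.disjoint_undiscovered (hσ : Set.BijOn σ (Set.Iio (nb + nw)) Set.univ)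
    (hO : IsDiscoveryProcess σ N C O) {j : ℕ} (hj1 : 1 ≤ j) (hj2 : j ≤ nb) (k : ℕ) :
    Disjoint (O j) (undiscovered σ N C k) :=
  Set.disjoint_left.mpr fun _ hx hu =>
    (Set.eq_empty_iff_forall_notMem.mp hu.2.2) j ((hO.mem_iff hσ hj1 hj2).mp hx).2.1

theorem IsDiscoveryProcess.diff_pool (hσ : Set.BijOn σ (Set.Iio (nb + nw)) Set.univ)
    (hO : IsDiscoveryProcess σ N C O) {k : ℕ} (hk1 : 1 ≤ k) (hk2 : k ≤ nb) :
    C \ pool σ C O k = (⋃ j ∈ Finset.range (k - 1), O (j + 1)) ∪ undiscovered σ N C k := by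
  ext x
  constructor
  · rintro ⟨hC, hx⟩
    rcases not_not.mp fun h => hx ⟨hC, h⟩ with hS | hU
    · by_cases hd : discoverers N σ x = ∅
      · exact Or.inr ⟨hC, hS, hd⟩
      obtain ⟨m, hm⟩ := Set.nonempty_iff_ne_empty.mpr hd
      obtain ⟨j, ⟨hj1, hj2, hjx, -⟩, -, hxj⟩ := hO.exists_mem_of_mem_discoverers hσ hC hm
      have hjk : j < k := by
        have := (mem_Sig_iff hσ).mp hS
        exact not_le.mp fun h => absurd ((tb_le_tb_iff hσ hk1 hk2 hj1 hj2).mpr h) (by omega)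
      refine Or.inl (Set.mem_biUnion (Finset.mem_range.mpr (by omega : j - 1 < k - 1)) ?_)
      rwa [Nat.sub_add_cancel hj1]
    · exact Or.inl hU
  · rintro (hU | ⟨hC, hS, -⟩)
    · obtain ⟨j, hj, hx⟩ : ∃ j < k - 1, x ∈ O (j + 1) := by simpa using hU
      exact ⟨((hO.mem_iff hσ (by omega) (by omega)).mp hx).1, fun h => h.2 (Or.inr hU)⟩
    · exact ⟨hC, fun h => h.2 (Or.inl hS)⟩

end Discovery

section LeadsAndRoots

variable {G : SimpleGraph (V nb nw)} {σ : ℕ → V nb nw}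

lemma isLead_iff_discoverers_eq_empty (hσ : Set.BijOn σ (Set.Iio (nb + nw)) Set.univ)
    (hG : G.IsBipartiteWith (blacks nb nw) (whites nb nw)) (hext : JoinsAcrossCuts G σ)
    {x : V nb nw} (hx : x ∈ whites nb nw) :
    isLead G σ x ↔ discoverers (fun v => nbhd G {v}) σ x = ∅ := by
  rw [isLead_iff_forall_adj hext, ← Set.not_nonempty_iff_eq_empty, discoverers_nonempty_iff hσ]
  constructor
  · rintro h ⟨a, -, hax, hxa⟩
    exact absurd (h a (mem_nbhd_singleton.mp hxa).2) (not_le.mpr hax)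
  · intro h y hy
    by_contra hyx
    exact h ⟨y, hG.mem_of_mem_adj' hx hy, not_le.mp hyx, mem_nbhd_singleton.mpr ⟨hy.ne.symm, hy⟩⟩

/-- Let `y` be the Prim parent of `x`: either `y` has an earlier (black) neighbour, or `y` opens
its component and the vertex right after `y` is black and adjacent to `y`. -/
lemma exists_mem_nbhd2_of_reachable (hσ : Set.BijOn σ (Set.Iio (nb + nw)) Set.univ)
    (hG : G.IsBipartiteWith (blacks nb nw) (whites nb nw)) (hext : JoinsAcrossCuts G σ)
    {x u : V nb nw} (hx : x ∈ blacks nb nw) (hu : u ∈ blacks nb nw) (hxu : G.Reachable x u)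
    (hux : rk0 σ u < rk0 σ x) :
    ∃ b ∈ blacks nb nw, rk0 σ b < rk0 σ x ∧ x ∈ nbhd2 G {b} := by
  have hncut : ¬ IsCut G σ (rk0 σ x) := fun hc =>
    absurd (hc.le_rk0_of_reachable le_rfl hxu) (not_le.mpr hux)
  obtain ⟨y, hyx, hyx'⟩ := hext x hncut
  have hy : y ∈ whites nb nw := hG.mem_of_mem_adj hx hyx'.symm
  by_cases hyd : ∃ b ∈ blacks nb nw, rk0 σ b < rk0 σ y ∧ G.Adj b y
  · obtain ⟨b, hb, hby, hby'⟩ := hyd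
    refine ⟨b, hb, hby.trans hyx, mem_nbhd2_singleton_of_adj hG hb ?_ hby' hyx'⟩
    rintro rfl
    exact absurd (hby.trans hyx) (lt_irrefl _)
  push Not at hyd
  have hcut : IsCut G σ (rk0 σ y) := isCut_of_forall_adj hext fun z hz =>
    not_lt.mp fun h => hyd z (hG.mem_of_mem_adj' hy hz) h hz
  obtain ⟨hn, hyz⟩ := adj_succ_of_isCut hσ hext hcut hyx'
  have hz := rk0_apply hσ hn
  have hzb : σ (rk0 σ y + 1) ∈ blacks nb nw := hG.mem_of_mem_adj' hy hyz.symm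
  have hzx : rk0 σ y + 1 < rk0 σ x := by
    refine lt_of_le_of_ne hyx fun h => ?_
    have := hcut.le_rk0_of_reachable hyx.le hxu
    exact hG.disjoint.ne_of_mem hu hy (rk0_injective hσ (by omega))
  refine ⟨_, hzb, by rwa [hz], mem_nbhd2_singleton_of_adj hG hzb ?_ hyz.symm hyx'⟩
  rintro rfl
  omega

lemma isRoot_iff_discoverers_eq_empty (hσ : Set.BijOn σ (Set.Iio (nb + nw)) Set.univ)
    (hG : G.IsBipartiteWith (blacks nb nw) (whites nb nw)) (hext : JoinsAcrossCuts G σ)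
    {x : V nb nw} (hx : x ∈ blacks nb nw) :
    isRoot G σ x ↔ discoverers (fun v => nbhd2 G {v}) σ x = ∅ := by
  rw [← Set.not_nonempty_iff_eq_empty, discoverers_nonempty_iff hσ]
  constructor
  · rintro ⟨-, h⟩ ⟨b, hb, hbx, hxb⟩
    exact absurd (h b hb (reachable_of_mem_nbhd2_singleton hxb).symm) (not_le.mpr hbx)
  · exact fun h => ⟨hx, fun u hu hxu => not_lt.mp fun hux =>
      h (exists_mem_nbhd2_of_reachable hσ hG hext hx hu hxu hux)⟩

lemma Jw_eq_undiscovered (hσ : Set.BijOn σ (Set.Iio (nb + nw)) Set.univ)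
    (hG : G.IsBipartiteWith (blacks nb nw) (whites nb nw)) (hext : JoinsAcrossCuts G σ)
    (k : ℕ) : Jw G σ k = undiscovered σ (fun v => nbhd G {v}) (whites nb nw) k := by
  ext x
  refine ⟨fun ⟨⟨hS, hw⟩, hl⟩ => ⟨hw, hS, (isLead_iff_discoverers_eq_empty hσ hG hext hw).mp hl⟩,
    fun ⟨hw, hS, hd⟩ => ⟨⟨hS, hw⟩, (isLead_iff_discoverers_eq_empty hσ hG hext hw).mpr hd⟩⟩

lemma Ib_eq_undiscovered (hσ : Set.BijOn σ (Set.Iio (nb + nw)) Set.univ)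
    (hG : G.IsBipartiteWith (blacks nb nw) (whites nb nw)) (hext : JoinsAcrossCuts G σ)
    (k : ℕ) : Ib G σ k = undiscovered σ (fun v => nbhd2 G {v}) (blacks nb nw) k := by
  ext x
  refine ⟨fun ⟨⟨hS, hb⟩, hr⟩ => ⟨hb, hS, (isRoot_iff_discoverers_eq_empty hσ hG hext hb).mp hr⟩,
    fun ⟨hb, hS, hd⟩ => ⟨⟨hS, hb⟩, (isRoot_iff_discoverers_eq_empty hσ hG hext hb).mpr hd⟩⟩

end LeadsAndRoots

section Processes

variable {G : SimpleGraph (V nb nw)} {σ : ℕ → V nb nw}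

lemma Kw_eq_pool (hσ : Set.BijOn σ (Set.Iio (nb + nw)) Set.univ) :
    ∀ k, 1 ≤ k → k ≤ nb → Kw G σ k = pool σ (whites nb nw) (Ow G σ) k
  | 1, _, _ => by
    ext x
    simp [Kw, pool, SigW]
  | k + 2, _, hk => by
    have hmono : Sig σ (tb σ (k + 1)) ⊆ Sig σ (tb σ (k + 2)) :=
      Set.image_mono (Set.Iio_subset_Iio ((tb_le_tb_iff hσ (by omega) (by omega) (by omega)
        hk).mpr (by omega)))
    show Kw G σ (k + 1) \ (Ow G σ (k + 1) ∪ SigW σ (tb σ (k + 2))) = _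
    rw [Kw_eq_pool hσ (k + 1) (by omega) (by omega)]
    ext x
    simp only [pool, SigW]
    rw [show k + 2 - 1 = k + 1 from rfl, show k + 1 - 1 = k from rfl, Finset.range_add_one,
      Finset.set_biUnion_insert]
    simp only [Set.mem_sdiff, Set.mem_union, Set.mem_inter_iff]
    have := @hmono x
    tauto

lemma isDiscoveryProcess_Ow (hσ : Set.BijOn σ (Set.Iio (nb + nw)) Set.univ) :
    IsDiscoveryProcess σ (fun v => nbhd G {v}) (whites nb nw) (Ow G σ) := fun k hk1 hk2 => by
  show nbhd G {sigb σ k} ∩ Kw G σ k = _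
  rw [Kw_eq_pool hσ k hk1 hk2]

lemma ObAux_fst (G : SimpleGraph (V nb nw)) (σ : ℕ → V nb nw) :
    ∀ k, (ObAux G σ k).1 = ⋃ j ∈ Finset.range k, Ob G σ (j + 1)
  | 0 => by simp [ObAux]
  | k + 1 => by
    rw [show (ObAux G σ (k + 1)).1 = (ObAux G σ k).1 ∪ Ob G σ (k + 1) from rfl, ObAux_fst G σ k,
      Finset.range_add_one, Finset.set_biUnion_insert, Set.union_comm]

lemma Kb_eq_pool (k : ℕ) : Kb G σ k = pool σ (blacks nb nw) (Ob G σ) k := by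
  ext x
  simp only [Kb, pool, ObAux_fst, SigB, Set.mem_sdiff, Set.mem_union, Set.mem_inter_iff]
  tauto

lemma isDiscoveryProcess_Ob :
    IsDiscoveryProcess σ (fun v => nbhd2 G {v}) (blacks nb nw) (Ob G σ)
  | k + 1, _, _ => by
    rw [← Kb_eq_pool]
    rfl

end Processes

section Exploration

variable {G : SimpleGraph (V nb nw)} {σ : ℕ → V nb nw}

/-- The root is the vertex right after `v` in Prim order. -/
theorem exists_root_of_mem_Jw (hσ : Set.BijOn σ (Set.Iio (nb + nw)) Set.univ)
    (hG : G.IsBipartiteWith (blacks nb nw) (whites nb nw)) (hext : JoinsAcrossCuts G σ)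
    {k : ℕ} (hk1 : 1 ≤ k) (hk2 : k ≤ nb) {v : V nb nw} (hv : v ∈ Jw G σ k)
    (hN : (nbhd G {v}).Nonempty) :
    ∃ j, 1 ≤ j ∧ j ≤ k ∧ v = vat σ (tb σ j - 1) ∧
      sigb σ j ∈ nbhd G {v} ∧ sigb σ j ∈ Ib G σ k := by
  obtain ⟨⟨hvS, hvw⟩, hlead⟩ := hv
  obtain ⟨u, hu⟩ := hN
  have hcut := isCut_of_isLead hext hlead
  obtain ⟨hn, hvw'⟩ := adj_succ_of_isCut hσ hext hcut (mem_nbhd_singleton.mp hu).2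
  set w := σ (rk0 σ v + 1)
  have hw : rk0 σ w = rk0 σ v + 1 := rk0_apply hσ hn
  have hwb : w ∈ blacks nb nw := hG.mem_of_mem_adj' hvw hvw'.symm
  have hwS : w ∈ SigB σ (tb σ k) := by
    obtain ⟨c, hc, rfl⟩ := exists_blackIndex_eq hσ hk1 hk2
    have hv := (mem_Sig_iff hσ).mp hvS
    have hcv : rk0 σ c ≠ rk0 σ v := fun h =>
      hG.disjoint.ne_of_mem hc hvw (rk0_injective hσ h)
    rw [tb_blackIndex hσ hc] at hv
    exact ⟨(mem_Sig_iff hσ).mpr (by rw [tb_blackIndex hσ hc]; omega), hwb⟩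
  refine ⟨blackIndex σ w, one_le_blackIndex hσ hwb, (mem_SigB_tb_iff hσ hk1 hk2 hwb).mp hwS,
    ?_, ?_, ?_⟩
  · rw [vat, tb_blackIndex hσ hwb, hw, Nat.add_sub_cancel, Nat.add_sub_cancel, apply_rk0 hσ]
  · rw [sigb_blackIndex hσ hwb]
    exact mem_nbhd_singleton.mpr ⟨hvw'.ne.symm, hvw'⟩
  · rw [sigb_blackIndex hσ hwb]
    refine ⟨hwS, hwb, fun u hu hwu => ?_⟩
    have := hcut.le_rk0_of_reachable le_rfl (hvw'.reachable.trans hwu)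
    have hne : rk0 σ u ≠ rk0 σ v := fun h => hG.disjoint.ne_of_mem hu hvw (rk0_injective hσ h)
    omega

lemma biUnion_range_pred_subset_biUnion_Icc (O : ℕ → Set (V nb nw)) (k : ℕ) :
    ⋃ j ∈ Finset.range (k - 1), O (j + 1) ⊆ ⋃ j ∈ Finset.Icc 1 k, O j := by
  intro x hx
  obtain ⟨j, hj, hxj⟩ : ∃ j < k - 1, x ∈ O (j + 1) := by simpa using hx
  exact Set.mem_biUnion (Finset.mem_Icc.mpr ⟨by omega, by omega⟩) hxj

theorem nbhd_SigB_tb_subset (hσ : Set.BijOn σ (Set.Iio (nb + nw)) Set.univ)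
    (hG : G.IsBipartiteWith (blacks nb nw) (whites nb nw)) (hext : JoinsAcrossCuts G σ)
    {k : ℕ} (hk1 : 1 ≤ k) (hk2 : k ≤ nb) :
    nbhd G (SigB σ (tb σ k)) ⊆ (⋃ j ∈ Finset.Icc 1 k, Ow G σ j) ∪ Jw G σ k := by
  have hOw := isDiscoveryProcess_Ow (G := G) hσ
  rintro x ⟨hxS, s, hs, hsx⟩
  have hxw : x ∈ whites nb nw := hG.mem_of_mem_adj hs.2 hsx
  by_cases hx : x ∈ Sig σ (tb σ k)
  · have hx' : x ∈ whites nb nw \ pool σ (whites nb nw) (Ow G σ) k :=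
      ⟨hxw, fun h => h.2 (Or.inl hx)⟩
    rw [hOw.diff_pool hσ hk1 hk2, ← Jw_eq_undiscovered hσ hG hext] at hx'
    exact Set.union_subset_union_left _ (biUnion_range_pred_subset_biUnion_Icc _ k) hx'
  · have hsx' : rk0 σ s < rk0 σ x :=
      ((mem_Sig_iff hσ).mp hs.1).trans_le (not_lt.mp ((mem_Sig_iff hσ).not.mp hx))
    have hm := blackIndex_mem_discoverers (N := fun v => nbhd G {v}) hσ hs.2 hsx'
      (mem_nbhd_singleton.mpr ⟨hsx.ne.symm, hsx⟩)
    obtain ⟨j, ⟨hj1, -⟩, hjm, hxj⟩ := hOw.exists_mem_of_mem_discoverers hσ hxw hm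
    exact Or.inl (Set.mem_biUnion (Finset.mem_Icc.mpr
      ⟨hj1, hjm.trans ((mem_SigB_tb_iff hσ hk1 hk2 hs.2).mp hs)⟩) hxj)

theorem nbhd2_SigB_tb (hσ : Set.BijOn σ (Set.Iio (nb + nw)) Set.univ)
    (hG : G.IsBipartiteWith (blacks nb nw) (whites nb nw)) {k : ℕ} (hk1 : 1 ≤ k)
    (hk2 : k ≤ nb) :
    nbhd2 G (SigB σ (tb σ k)) = (⋃ j ∈ Finset.Icc 1 k, Ob G σ j) \ SigB σ (tb σ k) := by
  have hOb := isDiscoveryProcess_Ob (G := G) (σ := σ)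
  have hSb : SigB σ (tb σ k) ⊆ blacks nb nw := Set.inter_subset_right
  ext x
  constructor
  · rintro ⟨⟨-, a, ⟨-, s, hs, hsa⟩, hax⟩, hxS⟩
    have hxb : x ∈ blacks nb nw := hG.mem_of_mem_adj' (hG.mem_of_mem_adj hs.2 hsa) hax.symm
    have hsx : rk0 σ s < rk0 σ x :=
      ((mem_Sig_iff hσ).mp hs.1).trans_le (not_lt.mp fun h => hxS ⟨(mem_Sig_iff hσ).mpr h, hxb⟩)
    have hm := blackIndex_mem_discoverers (N := fun v => nbhd2 G {v}) hσ hs.2 hsx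
      (mem_nbhd2_singleton_of_adj hG hs.2 (by rintro rfl; exact hxS hs) hsa hax)
    obtain ⟨j, ⟨hj1, -⟩, hjm, hxj⟩ := hOb.exists_mem_of_mem_discoverers hσ hxb hm
    exact ⟨Set.mem_biUnion (Finset.mem_Icc.mpr
      ⟨hj1, hjm.trans ((mem_SigB_tb_iff hσ hk1 hk2 hs.2).mp hs)⟩) hxj, hxS⟩
  · rintro ⟨hx, hxS⟩
    obtain ⟨j, ⟨hj1, hjk⟩, hxj⟩ : ∃ j, (1 ≤ j ∧ j ≤ k) ∧ x ∈ Ob G σ j := by simpa using hx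
    obtain ⟨hxb, hleast⟩ := (hOb.mem_iff hσ hj1 (hjk.trans hk2)).mp hxj
    obtain ⟨⟨-, a, ha, hax⟩, -⟩ := hleast.1.2.2.2
    obtain ⟨hjb, hj⟩ := blackIndex_sigb hσ hj1 (hjk.trans hk2)
    have haw : a ∈ whites nb nw := hG.mem_of_mem_adj hjb (mem_nbhd_singleton.mp ha).2
    refine ⟨⟨fun h => hG.disjoint.ne_of_mem hxb (nbhd_subset_of_isBipartiteWith hG hSb h) rfl,
      a, ⟨fun h => hG.disjoint.ne_of_mem (hSb h) haw rfl, sigb σ j, ?_,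
        (mem_nbhd_singleton.mp ha).2⟩, hax⟩, hxS⟩
    exact (mem_SigB_tb_iff hσ hk1 hk2 hjb).mpr (hj.symm ▸ hjk)

end Exploration

end PrimBip

open PrimBip

theorem statement_10_general {nb nw : ℕ}
    (W : Fin nb → Fin nw → ℝ) (σ : ℕ → V nb nw)
    (hσ : IsPrimSeq W σ)
    (p : ℝ) (hp : p ∈ Set.Icc (0:ℝ) 1)
    (G : SimpleGraph (V nb nw)) (hG : G = percGraph W p)
    (k : ℕ) (hk1 : 1 ≤ k) (hk2 : k ≤ nb) :
    -- (i)
    (∀ v ∈ Jw G σ k, (nbhd G {v}).Nonempty →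
      ∃ j, 1 ≤ j ∧ j ≤ k ∧ v = vat σ (tb σ j - 1) ∧
        sigb σ j ∈ nbhd G {v} ∧ sigb σ j ∈ Ib G σ k) ∧
    -- (ii)
    (Jw G σ nb ∩ Ow G σ k = ∅ ∧ Ib G σ nb ∩ Ob G σ k = ∅) ∧
    -- (iii): decompositions into disjoint sets
    (whites nb nw \ Kw G σ k = (⋃ j ∈ Finset.range (k-1), Ow G σ (j+1)) ∪ Jw G σ k ∧
     blacks nb nw \ Kb G σ k = (⋃ j ∈ Finset.range (k-1), Ob G σ (j+1)) ∪ Ib G σ k ∧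
     (∀ j₁ j₂, 1 ≤ j₁ → j₁ ≤ k-1 → 1 ≤ j₂ → j₂ ≤ k-1 → j₁ ≠ j₂ →
        Disjoint (Ow G σ j₁) (Ow G σ j₂) ∧ Disjoint (Ob G σ j₁) (Ob G σ j₂)) ∧
     (∀ j, 1 ≤ j → j ≤ k-1 →
        Disjoint (Ow G σ j) (Jw G σ k) ∧ Disjoint (Ob G σ j) (Ib G σ k))) ∧
    -- (iv)
    (nbhd G (SigB σ (tb σ k)) ⊆ (⋃ j ∈ Finset.Icc 1 k, Ow G σ j) ∪ Jw G σ k ∧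
     nbhd2 G (SigB σ (tb σ k)) = (⋃ j ∈ Finset.Icc 1 k, Ob G σ j) \ SigB σ (tb σ k)) := by
  have hbij := hσ.bijOn
  have hbip : G.IsBipartiteWith (blacks nb nw) (whites nb nw) :=
    hG ▸ isBipartiteWith_percGraph W (by linarith [hp.2])
  have hext : JoinsAcrossCuts G σ := hG ▸ hσ.joinsAcrossCuts p
  have hOw := isDiscoveryProcess_Ow (G := G) hbij
  have hOb := isDiscoveryProcess_Ob (G := G) (σ := σ)
  have hJw := Jw_eq_undiscovered hbij hbip hext
  have hIb := Ib_eq_undiscovered hbij hbip hext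
  refine ⟨fun v hv hN => exists_root_of_mem_Jw hbij hbip hext hk1 hk2 hv hN,
    ⟨?_, ?_⟩, ⟨?_, ?_, fun j₁ j₂ h₁ h₁' h₂ h₂' hne => ⟨?_, ?_⟩, fun j hj hj' => ⟨?_, ?_⟩⟩,
    nbhd_SigB_tb_subset hbij hbip hext hk1 hk2, nbhd2_SigB_tb hbij hbip hk1 hk2⟩
  · rw [hJw, Set.inter_comm, ← Set.disjoint_iff_inter_eq_empty]
    exact hOw.disjoint_undiscovered hbij hk1 hk2 nb
  · rw [hIb, Set.inter_comm, ← Set.disjoint_iff_inter_eq_empty]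
    exact hOb.disjoint_undiscovered hbij hk1 hk2 nb
  · rw [Kw_eq_pool hbij k hk1 hk2, hOw.diff_pool hbij hk1 hk2, hJw]
  · rw [Kb_eq_pool, hOb.diff_pool hbij hk1 hk2, hIb]
  · exact hOw.disjoint hbij h₁ (by omega) h₂ (by omega) hne
  · exact hOb.disjoint hbij h₁ (by omega) h₂ (by omega) hne
  · exact hJw k ▸ hOw.disjoint_undiscovered hbij hj (by omega) k
  · exact hIb k ▸ hOb.disjoint_undiscovered hbij hj (by omega) k

/-- Lemma `lem: Kset`: almost-sure structural properties of the
2-neighbourhood exploration of `G(n_b,n_w,p)` in Prim's order (stated here whenever the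
edge weights are distinct and in `(0,1)` and `σ` is the Prim sequence). -/
theorem statement_10 {nb nw : ℕ} (hnb : 0 < nb) (hnw : 0 < nw)
    (W : Fin nb → Fin nw → ℝ) (σ : ℕ → V nb nw)
    (hW : GoodWeights W) (hσ : IsPrimSeq W σ)
    (p : ℝ) (hp : p ∈ Set.Icc (0:ℝ) 1)
    (G : SimpleGraph (V nb nw)) (hG : G = percGraph W p)
    (k : ℕ) (hk1 : 1 ≤ k) (hk2 : k ≤ nb) :
    -- (i)
    (∀ v ∈ Jw G σ k, (nbhd G {v}).Nonempty →
      ∃ j, 1 ≤ j ∧ j ≤ k ∧ v = vat σ (tb σ j - 1) ∧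
        sigb σ j ∈ nbhd G {v} ∧ sigb σ j ∈ Ib G σ k) ∧
    -- (ii)
    (Jw G σ nb ∩ Ow G σ k = ∅ ∧ Ib G σ nb ∩ Ob G σ k = ∅) ∧
    -- (iii): decompositions into disjoint sets
    (whites nb nw \ Kw G σ k = (⋃ j ∈ Finset.range (k-1), Ow G σ (j+1)) ∪ Jw G σ k ∧
     blacks nb nw \ Kb G σ k = (⋃ j ∈ Finset.range (k-1), Ob G σ (j+1)) ∪ Ib G σ k ∧
     (∀ j₁ j₂, 1 ≤ j₁ → j₁ ≤ k-1 → 1 ≤ j₂ → j₂ ≤ k-1 → j₁ ≠ j₂ →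
        Disjoint (Ow G σ j₁) (Ow G σ j₂) ∧ Disjoint (Ob G σ j₁) (Ob G σ j₂)) ∧
     (∀ j, 1 ≤ j → j ≤ k-1 →
        Disjoint (Ow G σ j) (Jw G σ k) ∧ Disjoint (Ob G σ j) (Ib G σ k))) ∧
    -- (iv)
    (nbhd G (SigB σ (tb σ k)) ⊆ (⋃ j ∈ Finset.Icc 1 k, Ow G σ j) ∪ Jw G σ k ∧
     nbhd2 G (SigB σ (tb σ k)) = (⋃ j ∈ Finset.Icc 1 k, Ob G σ j) \ SigB σ (tb σ k)) :=
  statement_10_general W σ hσ p hp G hG k hk1 hk2
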